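/- Let (Ω, 𝔉, (ℱ_k)_{k∈ℕ}, P) be a filtered probability space, Θ > 0, and B ∈ ℝ. Let (Ψ_k)_{k∈ℕ} be integrable real random variables with Ψ_k ≥ B almost surely for every k, and let (Δ_k)_{k≥1} be nonnegative random variables such that, for every k ≥ 1, Δ_k is ℱ_{k−1}-measurable and E[Ψ_{k+1} − Ψ_k | ℱ_{k−1}] ≤ −Θ·Δ_k² almost surely. Then almost surely Σ_{k≥1} Δ_k² < ∞, and in particular Δ_k → 0 almost surely as k → ∞. -/
import Mathlib


open MeasureTheory Filter

theorem stmt_10 {Ω : Type*} {𝔉 : MeasurableSpace Ω} (P : Measure Ω)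
    [IsProbabilityMeasure P]
    (ℱ : Filtration ℕ 𝔉) (Θ B : ℝ) (hΘ : 0 < Θ)
    (Ψ : ℕ → Ω → ℝ) (hΨint : ∀ k, Integrable (Ψ k) P)
    (hΨB : ∀ k, ∀ᵐ ω ∂P, B ≤ Ψ k ω)
    (Δ : ℕ → Ω → ℝ) (hΔ0 : ∀ k ω, 0 ≤ Δ k ω)
    (hΔm : ∀ k, 1 ≤ k → Measurable[ℱ (k - 1)] (Δ k))
    (hdec : ∀ k, 1 ≤ k → ∀ᵐ ω ∂P,
      (P[(fun ω => Ψ (k + 1) ω - Ψ k ω)|ℱ (k - 1)]) ω ≤ -Θ * Δ k ω ^ 2) :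
    ∀ᵐ ω ∂P, (Summable fun k => Δ (k + 1) ω ^ 2) ∧
      Tendsto (fun k => Δ k ω) atTop (nhds 0) := by
  -- measurability of Δ k in 𝔉
  have hΔmeas : ∀ k, 1 ≤ k → Measurable (Δ k) := fun k hk =>
    (hΔm k hk).mono (ℱ.le _) le_rfl
  -- integrability of Δ k ^ 2
  have hΔint : ∀ k, 1 ≤ k → Integrable (fun ω => Δ k ω ^ 2) P := by
    intro k hk
    refine Integrable.mono'
      ((integrable_condExp (m := ℱ (k - 1))
        (f := fun ω => Ψ (k + 1) ω - Ψ k ω)).abs.const_mul Θ⁻¹)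
      (((hΔmeas k hk).pow_const 2).aestronglyMeasurable) ?_
    filter_upwards [hdec k hk] with ω hω
    have h1 : Θ * Δ k ω ^ 2 ≤ -(P[(fun ω => Ψ (k + 1) ω - Ψ k ω)|ℱ (k - 1)]) ω := by
      linarith
    have h2 : Θ * Δ k ω ^ 2 ≤ |(P[(fun ω => Ψ (k + 1) ω - Ψ k ω)|ℱ (k - 1)]) ω| :=
      h1.trans (neg_le_abs _)
    rw [Real.norm_eq_abs, abs_of_nonneg (sq_nonneg (Δ k ω)), le_inv_mul_iff₀ hΘ]
    linarith
  -- expectation decrease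
  have hkey : ∀ k, 1 ≤ k →
      Θ * ∫ ω, Δ k ω ^ 2 ∂P ≤ (∫ ω, Ψ k ω ∂P) - ∫ ω, Ψ (k + 1) ω ∂P := by
    intro k hk
    have hcond := integrable_condExp (μ := P) (m := ℱ (k - 1))
      (f := fun ω => Ψ (k + 1) ω - Ψ k ω)
    have hmono : ∫ ω, Θ * Δ k ω ^ 2 ∂P ≤
        ∫ ω, -(P[(fun ω => Ψ (k + 1) ω - Ψ k ω)|ℱ (k - 1)]) ω ∂P := by
      refine integral_mono_ae ((hΔint k hk).const_mul Θ) hcond.neg ?_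
      filter_upwards [hdec k hk] with ω hω
      linarith
    rw [integral_const_mul] at hmono
    rw [integral_neg, integral_condExp (ℱ.le _),
      integral_sub (hΨint (k + 1)) (hΨint k)] at hmono
    linarith
  -- B bound on integrals
  have hB : ∀ k, B ≤ ∫ ω, Ψ k ω ∂P := by
    intro k
    have : ∫ _ω, B ∂P ≤ ∫ ω, Ψ k ω ∂P :=
      integral_mono_ae (integrable_const B) (hΨint k) (hΨB k)
    simpa using this
  -- partial-sum bound
  set C : ℝ := ((∫ ω, Ψ 1 ω ∂P) - B) / Θ with hC
  have hsum : ∀ n, Θ * (∑ j ∈ Finset.range n, ∫ ω, Δ (j + 1) ω ^ 2 ∂P) ≤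
      (∫ ω, Ψ 1 ω ∂P) - ∫ ω, Ψ (n + 1) ω ∂P := by
    intro n
    induction n with
    | zero => simp
    | succ n ih =>
      rw [Finset.sum_range_succ, mul_add]
      have h := hkey (n + 1) (Nat.le_add_left 1 n)
      linarith
  have hsumC : ∀ n, (∑ j ∈ Finset.range n, ∫ ω, Δ (j + 1) ω ^ 2 ∂P) ≤ C := by
    intro n
    rw [hC, le_div_iff₀ hΘ]
    have := hB (n + 1)
    have := hsum n
    linarith
  -- lintegral version
  have hint0 : ∀ j : ℕ, 0 ≤ ∫ ω, Δ (j + 1) ω ^ 2 ∂P := fun j =>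
    integral_nonneg fun ω => sq_nonneg _
  have hlin : ∀ j : ℕ, ∫⁻ ω, ENNReal.ofReal (Δ (j + 1) ω ^ 2) ∂P =
      ENNReal.ofReal (∫ ω, Δ (j + 1) ω ^ 2 ∂P) := fun j =>
    (ofReal_integral_eq_lintegral_ofReal (hΔint (j + 1) (Nat.le_add_left 1 j))
      (Filter.Eventually.of_forall fun ω => sq_nonneg _)).symm
  have htsum : (∑' j : ℕ, ∫⁻ ω, ENNReal.ofReal (Δ (j + 1) ω ^ 2) ∂P) ≤
      ENNReal.ofReal C := by
    refine ENNReal.tsum_le_of_sum_range_le ?_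
    intro n
    rw [show (∑ j ∈ Finset.range n, ∫⁻ ω, ENNReal.ofReal (Δ (j + 1) ω ^ 2) ∂P)
        = ENNReal.ofReal (∑ j ∈ Finset.range n, ∫ ω, Δ (j + 1) ω ^ 2 ∂P) by
      rw [ENNReal.ofReal_sum_of_nonneg fun j _ => hint0 j]
      exact Finset.sum_congr rfl fun j _ => hlin j]
    exact ENNReal.ofReal_le_ofReal (hsumC n)
  have hmeas' : ∀ j : ℕ, AEMeasurable (fun ω => ENNReal.ofReal (Δ (j + 1) ω ^ 2)) P :=
    fun j => (ENNReal.measurable_ofReal.comp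
      ((hΔmeas (j + 1) (Nat.le_add_left 1 j)).pow_const 2)).aemeasurable
  have hlint : ∫⁻ ω, (∑' j : ℕ, ENNReal.ofReal (Δ (j + 1) ω ^ 2)) ∂P ≠ ⊤ := by
    rw [lintegral_tsum hmeas']
    exact ne_of_lt (lt_of_le_of_lt htsum ENNReal.ofReal_lt_top)
  have hae : ∀ᵐ ω ∂P, (∑' j : ℕ, ENNReal.ofReal (Δ (j + 1) ω ^ 2)) < ⊤ :=
    ae_lt_top' (AEMeasurable.ennreal_tsum hmeas') hlint
  filter_upwards [hae] with ω hω
  have hsummable : Summable fun j => Δ (j + 1) ω ^ 2 := by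
    have := ENNReal.summable_toReal hω.ne
    simpa [ENNReal.toReal_ofReal (sq_nonneg _)] using this
  refine ⟨hsummable, ?_⟩
  have h0 : Tendsto (fun j => Δ (j + 1) ω ^ 2) atTop (nhds 0) :=
    hsummable.tendsto_atTop_zero
  have h1 : Tendsto (fun j => Δ (j + 1) ω) atTop (nhds 0) := by
    have := (Real.continuous_sqrt.tendsto 0).comp h0
    simpa [Function.comp_def, Real.sqrt_sq (hΔ0 _ ω)] using this
  exact (tendsto_add_atTop_iff_nat 1).mp h1
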